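/- Robust Bayes equals maximum entropy: for a nonempty compact convex set A of probability distributions on a finite set X, min_{Q ∈ Δ(X)} max_{P ∈ A} H(P,Q) = max_{P ∈ A} H(P), where H(P,Q) is cross entropy. -/

import Mathlib

/-!
Gibbs' inequality `H(P) ≤ H(P, Q)` gives `≥`. For `≤`, take `P*` maximizing the (continuous)
entropy on the compact set `A`; we show `H(P, P*) ≤ H(P*)` for every `P ∈ A`, so `Q = P*` attains
the bound. Along the segment `Pₜ = (1 - t) P* + t P ⊆ A`, cross entropy is affine in its first
argument, so `H(Pₜ) = (1 - t) H(P*, Pₜ) + t H(P, Pₜ)`; Gibbs bounds the first term below by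
`(1 - t) H(P*)` and maximality gives `H(Pₜ) ≤ H(P*)`, whence `H(P, Pₜ) ≤ H(P*)`. Letting `t → 0⁺`
first forces `P ≪ P*` (otherwise `H(P, Pₜ) ≥ -P x log (t P x) → ∞`) and then `H(P, P*) ≤ H(P*)`
by continuity.
-/

open Real Filter Set Topology

noncomputable def crossEntE {X : Type*} [Fintype X] (P Q : X → ℝ) : EReal :=
  ∑ x, (if Q x = 0 ∧ P x ≠ 0 then (⊤ : EReal) else ((-(P x * Real.log (Q x)) : ℝ) : EReal))

noncomputable def crossEnt {X : Type*} [Fintype X] (P Q : X → ℝ) : ℝ :=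
  -∑ x, P x * log (Q x)

noncomputable def entropy {X : Type*} [Fintype X] (P : X → ℝ) : ℝ :=
  crossEnt P P

lemma mul_log_sub_mul_log_le_sub {p q : ℝ} (hp : 0 ≤ p) (hq : 0 ≤ q) (hpq : q = 0 → p = 0) :
    p * log q - p * log p ≤ q - p := by
  rcases hp.eq_or_lt with rfl | hp
  · simpa using hq
  have hq : 0 < q := hq.lt_of_ne fun h => hp.ne' (hpq h.symm)
  calc p * log q - p * log p = p * log (q / p) := by rw [log_div hq.ne' hp.ne']; ring
    _ ≤ p * (q / p - 1) := mul_le_mul_of_nonneg_left (log_le_sub_one_of_pos (by positivity)) hp.le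
    _ = q - p := by field_simp

section

variable {X : Type*} [Fintype X]

theorem entropy_le_crossEnt {P Q : X → ℝ} (hP : ∀ x, 0 ≤ P x) (hQ : ∀ x, 0 ≤ Q x)
    (hsum : ∑ x, Q x ≤ ∑ x, P x) (hPQ : ∀ x, Q x = 0 → P x = 0) :
    entropy P ≤ crossEnt P Q := by
  have hterms : ∑ x, (P x * log (Q x) - P x * log (P x)) ≤ ∑ x, (Q x - P x) :=
    Finset.sum_le_sum fun x _ => mul_log_sub_mul_log_le_sub (hP x) (hQ x) (hPQ x)
  rw [Finset.sum_sub_distrib, Finset.sum_sub_distrib] at hterms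
  simp only [entropy, crossEnt]
  linarith

theorem continuousAt_crossEnt {P Q : X → ℝ} (hPQ : ∀ x, Q x = 0 → P x = 0) :
    ContinuousAt (crossEnt P) Q := by
  refine (tendsto_finsetSum Finset.univ fun x _ => ?_).neg
  by_cases hPx : P x = 0
  · simp only [hPx, zero_mul]
    exact continuousAt_const
  · exact continuousAt_const.mul ((continuous_apply x).continuousAt.log fun h => hPx (hPQ x h))

theorem continuous_entropy : Continuous (entropy : (X → ℝ) → ℝ) :=
  (continuous_finsetSum _ fun x _ => (continuous_apply x).mul_log).neg

theorem crossEnt_smul_add_smul_left (P P' Q : X → ℝ) (a b : ℝ) :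
    crossEnt (a • P + b • P') Q = a * crossEnt P Q + b * crossEnt P' Q := by
  simp only [crossEnt, Pi.add_apply, Pi.smul_apply, smul_eq_mul, add_mul, mul_assoc,
    Finset.sum_add_distrib, ← Finset.mul_sum]
  ring

theorem neg_mul_log_le_crossEnt {P Q : X → ℝ} (hP : ∀ x, 0 ≤ P x) (hQ : Q ∈ stdSimplex ℝ X)
    (x : X) : -(P x * log (Q x)) ≤ crossEnt P Q := by
  rw [crossEnt, ← Finset.sum_neg_distrib]
  refine Finset.single_le_sum (f := fun y => -(P y * log (Q y))) (fun y _ => ?_)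
    (Finset.mem_univ x)
  obtain ⟨hQ0, hQ1⟩ := mem_Icc_of_mem_stdSimplex hQ y
  nlinarith [hP y, log_nonpos hQ0 hQ1]

theorem crossEntE_eq_crossEnt {P Q : X → ℝ} (hPQ : ∀ x, Q x = 0 → P x = 0) :
    crossEntE P Q = crossEnt P Q := by
  rw [crossEnt, ← Finset.sum_neg_distrib, crossEntE]
  refine Finset.sum_hom_rel (r := fun (a : ℝ) (b : EReal) => b = a) rfl fun x a b h => ?_
  rw [h, if_neg fun h => h.2 (hPQ x h.1), EReal.coe_add]

theorem crossEntE_eq_top {P Q : X → ℝ} {x : X} (hQx : Q x = 0) (hPx : P x ≠ 0) :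
    crossEntE P Q = ⊤ := by
  classical
  rw [crossEntE, ← Finset.add_sum_erase _ _ (Finset.mem_univ x), if_pos ⟨hQx, hPx⟩]
  refine EReal.top_add_of_ne_bot (Finset.sum_induction _ (· ≠ ⊥)
    (fun a b ha hb => EReal.add_ne_bot_iff.2 ⟨ha, hb⟩) EReal.zero_ne_bot fun y _ => ?_)
  split_ifs
  exacts [top_ne_bot, EReal.coe_ne_bot _]

theorem entropy_le_crossEntE {P Q : X → ℝ} (hP : P ∈ stdSimplex ℝ X) (hQ : Q ∈ stdSimplex ℝ X) :
    (entropy P : EReal) ≤ crossEntE P Q := by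
  by_cases hPQ : ∀ x, Q x = 0 → P x = 0
  · rw [crossEntE_eq_crossEnt hPQ, EReal.coe_le_coe_iff]
    exact entropy_le_crossEnt hP.1 hQ.1 (by rw [hP.2, hQ.2]) hPQ
  · push Not at hPQ
    obtain ⟨x, hQx, hPx⟩ := hPQ
    rw [crossEntE_eq_top hQx hPx]
    exact le_top

theorem crossEnt_segment_le_entropy {P Q : X → ℝ} (hP : P ∈ stdSimplex ℝ X)
    (hQ : Q ∈ stdSimplex ℝ X) {t : ℝ} (ht : t ∈ Ioo (0 : ℝ) 1)
    (hmax : entropy ((1 - t) • Q + t • P) ≤ entropy Q) :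
    crossEnt P ((1 - t) • Q + t • P) ≤ entropy Q := by
  set R := (1 - t) • Q + t • P
  have hR : R ∈ stdSimplex ℝ X :=
    convex_stdSimplex ℝ X hQ hP (by linarith [ht.2]) ht.1.le (by ring)
  have hQR : ∀ x, R x = 0 → Q x = 0 := fun x hx => by
    have h₁ : 0 ≤ (1 - t) * Q x := mul_nonneg (by linarith [ht.2]) (hQ.1 x)
    have h₂ : 0 ≤ t * P x := mul_nonneg ht.1.le (hP.1 x)
    have h₀ : (1 - t) * Q x = 0 := by
      simp only [R, Pi.add_apply, Pi.smul_apply, smul_eq_mul] at hx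
      linarith
    exact (mul_eq_zero.1 h₀).resolve_left (by linarith [ht.2])
  have hsplit : entropy R = (1 - t) * crossEnt Q R + t * crossEnt P R :=
    crossEnt_smul_add_smul_left ..
  have hgibbs : entropy Q ≤ crossEnt Q R :=
    entropy_le_crossEnt hQ.1 hR.1 (by rw [hQ.2, hR.2]) hQR
  refine le_of_mul_le_mul_left ?_ ht.1
  linarith [mul_le_mul_of_nonneg_left hgibbs (by linarith [ht.2] : (0 : ℝ) ≤ 1 - t)]

theorem tendsto_neg_mul_log_mul_nhdsGT_zero {p : ℝ} (hp : 0 < p) :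
    Tendsto (fun t => -(p * log (t * p))) (𝓝[>] 0) atTop := by
  have hlin : Tendsto (fun t => t * p) (𝓝[>] 0) (𝓝[>] 0) := by
    refine tendsto_nhdsWithin_iff.2 ⟨?_, eventually_mem_nhdsWithin.mono fun t ht => mul_pos ht hp⟩
    exact ((continuous_mul_const p).tendsto' 0 0 (zero_mul p)).mono_left nhdsWithin_le_nhds
  exact tendsto_neg_atBot_atTop.comp ((tendsto_log_nhdsGT_zero.comp hlin).const_mul_atBot hp)

theorem absCont_of_eventually_crossEnt_segment_le {P Q : X → ℝ} (hP : P ∈ stdSimplex ℝ X)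
    (hQ : Q ∈ stdSimplex ℝ X) {C : ℝ}
    (hC : ∀ᶠ t in 𝓝[>] (0 : ℝ), crossEnt P ((1 - t) • Q + t • P) ≤ C) :
    ∀ x, Q x = 0 → P x = 0 := by
  intro x hQx
  by_contra hPx
  have hsegment : ∀ᶠ t in 𝓝[>] (0 : ℝ), (1 - t) • Q + t • P ∈ stdSimplex ℝ X := by
    filter_upwards [Ioo_mem_nhdsGT one_pos] with t ht
    exact convex_stdSimplex ℝ X hQ hP (by linarith [ht.2]) ht.1.le (by ring)
  have hlarge :=
    (tendsto_neg_mul_log_mul_nhdsGT_zero ((hP.1 x).lt_of_ne' hPx)).eventually_gt_atTop C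
  obtain ⟨t, hle, hmem, hgt⟩ := (hC.and (hsegment.and hlarge)).exists
  have hterm := neg_mul_log_le_crossEnt hP.1 hmem x
  simp only [Pi.add_apply, Pi.smul_apply, smul_eq_mul, hQx, mul_zero, zero_add] at hterm
  linarith

theorem crossEntE_le_entropy_of_isMaxOn {A : Set (X → ℝ)} (hconv : Convex ℝ A)
    (hsub : A ⊆ stdSimplex ℝ X) {Q P : X → ℝ} (hQ : Q ∈ A) (hmax : IsMaxOn entropy A Q)
    (hP : P ∈ A) : crossEntE P Q ≤ entropy Q := by
  have hbound : ∀ᶠ t in 𝓝[>] (0 : ℝ), crossEnt P ((1 - t) • Q + t • P) ≤ entropy Q := by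
    filter_upwards [Ioo_mem_nhdsGT one_pos] with t ht
    exact crossEnt_segment_le_entropy (hsub hP) (hsub hQ) ht
      (hmax (hconv hQ hP (by linarith [ht.2]) ht.1.le (by ring)))
  have hPQ := absCont_of_eventually_crossEnt_segment_le (hsub hP) (hsub hQ) hbound
  have hsegment : Tendsto (fun t : ℝ => (1 - t) • Q + t • P) (𝓝[>] 0) (𝓝 Q) :=
    ((by fun_prop : Continuous fun t : ℝ => (1 - t) • Q + t • P).tendsto' 0 Q
      (by simp)).mono_left nhdsWithin_le_nhds
  rw [crossEntE_eq_crossEnt hPQ, EReal.coe_le_coe_iff]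
  exact le_of_tendsto ((continuousAt_crossEnt hPQ).tendsto.comp hsegment) hbound

end

/-- Robust Bayes equals maximum entropy:
`min_{Q ∈ Δ(X)} max_{P ∈ A} H(P,Q) = max_{P ∈ A} H(P)` for nonempty compact convex `A`. -/
theorem robustBayes_eq_maxEntropy {X : Type*} [Fintype X]
    (A : Set (X → ℝ)) (hne : A.Nonempty) (hcomp : IsCompact A) (hconv : Convex ℝ A)
    (hsub : A ⊆ {p : X → ℝ | (∀ x, 0 ≤ p x) ∧ ∑ x, p x = 1}) :
    (⨅ Q ∈ {p : X → ℝ | (∀ x, 0 ≤ p x) ∧ ∑ x, p x = 1}, ⨆ P ∈ A, crossEntE P Q)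
      = ⨆ P ∈ A, ((-∑ x, P x * Real.log (P x) : ℝ) : EReal) := by
  change ⨅ Q ∈ stdSimplex ℝ X, ⨆ P ∈ A, crossEntE P Q = ⨆ P ∈ A, (entropy P : EReal)
  obtain ⟨Q, hQ, hmax⟩ := hcomp.exists_isMaxOn hne continuous_entropy.continuousOn
  apply le_antisymm
  · refine iInf₂_le_of_le Q (hsub hQ) (iSup₂_le fun P hP => ?_)
    exact (crossEntE_le_entropy_of_isMaxOn hconv hsub hQ hmax hP).trans
      (le_iSup₂_of_le Q hQ le_rfl)
  · exact le_iInf₂ fun Q' hQ' => iSup₂_mono fun P hP => entropy_le_crossEntE (hsub hP) hQ'
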